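/- (Theorem 1) Fix n ≥ 1. The map sending an admissible permutation π of {0,…,2^{n(M+1)}−1} to the n-tuple (R*_{n,1},…,R*_{n,n}) defined by R*_{n,i}(x) = R_i(y) for x ∈ D_{n,ℓ} and any y ∈ E_{n,π(ℓ)} is a bijection from the set of admissible permutations of {0,…,2^{n(M+1)}−1} onto the set of n-tuples (R*_1,…,R*_n) of random variables on (0,1) such that: the family is mutually independent; each R*_i is n-trim; each R*_i takes each value o_s (1 ≤ s ≤ m) with probability 2^{−(M+1)}; and R*_1(x) + ⋯ + R*_n(x) = S*_n(x) for all x ∈ (0,1). -/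

import Mathlib

open MeasureTheory Set ProbabilityTheory
open scoped ENNReal

attribute [local instance] MeasureTheory.Measure.Subtype.measureSpace
attribute [local instance] Classical.propDecidable

noncomputable section

namespace DGS

/-- The i-th binary digit (i ≥ 1) of `x ∈ (0,1)`, using the binary expansion with
infinitely many zero digits. -/
def eps (i : ℕ) (x : ℝ) : ℕ := (⌊x * 2 ^ i⌋).toNat % 2

/-- The r-th element `j_{i,r} = i(i-1)(M+1)/2 + r·i` of `J̄_i`, for `1 ≤ r ≤ M+1`. -/
def jidx (M i r : ℕ) : ℕ := i * (i - 1) * (M + 1) / 2 + r * i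

/-- The q-th binary digit (1-indexed, most significant first) of `ℓ` viewed
as a `w`-bit number: `bit_q(ℓ) = ⌊ℓ / 2^(w-q)⌋ mod 2`. -/
def bitOf (w ℓ q : ℕ) : ℕ := ℓ / 2 ^ (w - q) % 2

/-- The dyadic interval `D_{n,ℓ}` of depth `n(M+1)`. -/
def D (M n ℓ : ℕ) : Set ℝ :=
  if ℓ = 0 then Ioo 0 ((2 : ℝ) ^ (n * (M + 1)))⁻¹
  else Ico ((ℓ : ℝ) * ((2 : ℝ) ^ (n * (M + 1)))⁻¹) (((ℓ : ℝ) + 1) * ((2 : ℝ) ^ (n * (M + 1)))⁻¹)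

/-- `E_{n,ℓ}`: the set of `x ∈ (0,1)` whose binary digits along `J̄^n` are prescribed by the
ℓ-th member of the lexicographic enumeration of `{0,1}^{J̄^n}` (coordinates listed by
increasing index); the element `j_{i,r}` of `J̄^n` is its `((i-1)(M+1)+r)`-th smallest member. -/
def E (M n ℓ : ℕ) : Set ℝ :=
  { x | x ∈ Ioo (0:ℝ) 1 ∧ ∀ i ∈ Finset.Icc 1 n, ∀ r ∈ Finset.Icc 1 (M + 1),
      eps (jidx M i r) x = bitOf (n * (M + 1)) ℓ ((i - 1) * (M + 1) + r) }

/-- `S_n = R_1 + ⋯ + R_n`. -/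
def S (R : ℕ → ℝ → ℝ) (n : ℕ) (x : ℝ) : ℝ := ∑ i ∈ Finset.Icc 1 n, R i x

/-- The right-continuous quantile of `S_n`:
`S*_n(x) = inf { t : λ{y ∈ (0,1) : S_n(y) ≤ t} > x }`. -/
def Sstar (R : ℕ → ℝ → ℝ) (n : ℕ) (x : ℝ) : ℝ :=
  sInf { t : ℝ | ENNReal.ofReal x < volume { y | y ∈ Ioo (0:ℝ) 1 ∧ S R n y ≤ t } }

/-- Lebesgue measure restricted to `(0,1)`. -/
def μ01 : Measure ℝ := volume.restrict (Ioo 0 1)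

/-- `Y` is n-trim: constant on each dyadic interval of depth `n(M+1)`. -/
def Trim (M n : ℕ) (Y : ℝ → ℝ) : Prop :=
  ∀ ℓ < 2 ^ (n * (M + 1)), ∀ x ∈ D M n ℓ, ∀ y ∈ D M n ℓ, Y x = Y y

/-- `π` is an admissible permutation of `{0, …, 2^(n(M+1)) - 1}`:
`S*_n(x) = S_n(y)` whenever `x ∈ D_{n,ℓ}` and `y ∈ E_{n,π(ℓ)}`. -/
def Admissible (M : ℕ) (R : ℕ → ℝ → ℝ) (n : ℕ)
    (π : Equiv.Perm (Fin (2 ^ (n * (M + 1))))) : Prop :=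
  ∀ ℓ : Fin (2 ^ (n * (M + 1))), ∀ x ∈ D M n (ℓ : ℕ), ∀ y ∈ E M n ((π ℓ : Fin _) : ℕ),
    Sstar R n x = S R n y

/-- The standing assumptions: `O` depends bijectively on the first `M+1` binary digits,
`o` is the increasing enumeration of its `2^(M+1)` values, and `R_i(x) = O(P_i(x))`,
where `P_i(x)` has digits `ε_{j_{i,r}}(x)`. -/
structure Setup (M : ℕ) (O : ℝ → ℝ) (o : Fin (2 ^ (M + 1)) → ℝ) (R : ℕ → ℝ → ℝ) : Prop where
  O_dep : ∀ x ∈ Ioo (0:ℝ) 1, ∀ y ∈ Ioo (0:ℝ) 1,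
    (∀ r ∈ Finset.Icc 1 (M + 1), eps r x = eps r y) → O x = O y
  O_inj : ∀ x ∈ Ioo (0:ℝ) 1, ∀ y ∈ Ioo (0:ℝ) 1,
    O x = O y → ∀ r ∈ Finset.Icc 1 (M + 1), eps r x = eps r y
  o_mono : StrictMono o
  o_range : Set.range o = O '' Ioo (0:ℝ) 1
  R_def : ∀ i, 1 ≤ i → ∀ x ∈ Ioo (0:ℝ) 1, ∀ y ∈ Ioo (0:ℝ) 1,
    (∀ r ∈ Finset.Icc 1 (M + 1), eps r y = eps (jidx M i r) x) → R i x = O y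

/-- The sample space `Ω = (0,1)` (with the subspace Lebesgue measure). -/
abbrev Ω : Type := ↥(Set.Ioo (0:ℝ) 1)

/-- A "good" n-tuple of random variables on `(0,1)`: mutually independent, each n-trim,
each taking each value `o_s` with probability `2^{-(M+1)}`, and summing pointwise to `S*_n`. -/
def GoodTuple (M : ℕ) (o : Fin (2 ^ (M + 1)) → ℝ) (R : ℕ → ℝ → ℝ) (n : ℕ)
    (Tup : Fin n → Ω → ℝ) : Prop :=
  iIndepFun Tup (volume : Measure Ω) ∧
  (∀ i : Fin n, ∀ ℓ < 2 ^ (n * (M + 1)), ∀ x y : Ω,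
      (x : ℝ) ∈ D M n ℓ → (y : ℝ) ∈ D M n ℓ → Tup i x = Tup i y) ∧
  (∀ i : Fin n, ∀ s : Fin (2 ^ (M + 1)),
      volume { ω : Ω | Tup i ω = o s } = ((2 : ℝ≥0∞) ^ (M + 1))⁻¹) ∧
  (∀ ω : Ω, ∑ i, Tup i ω = Sstar R n (ω : ℝ))

/-- `γ_{n,t}`: the sum of the multinomial coefficients `binom(n,k)` over the
multinomial vectors `k ∈ K_n` with `k·o = vt`. -/
def gammaCoef (M : ℕ) (o : Fin (2 ^ (M + 1)) → ℝ) (n : ℕ) (vt : ℝ) : ℕ :=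
  ∑ k ∈ Finset.univ.filter (fun k : Fin (2 ^ (M + 1)) → Fin (n + 1) =>
      (∑ s, (k s : ℕ)) = n ∧ (∑ s, ((k s : ℕ) : ℝ) * o s) = vt),
    Nat.multinomial Finset.univ (fun s => (k s : ℕ))

/-- `SMC(n,t) = Σ { binom(n,k) : k ∈ K_n, k·o < v_n^t }` for `t ≤ T_n`, with the
convention `SMC(n, T_n + 1) = 2^(n(M+1))`. -/
def SMC (M : ℕ) (o : Fin (2 ^ (M + 1)) → ℝ) (n T : ℕ) (v : ℕ → ℝ) (t : ℕ) : ℕ :=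
  if t = T + 1 then 2 ^ (n * (M + 1))
  else ∑ k ∈ Finset.univ.filter (fun k : Fin (2 ^ (M + 1)) → Fin (n + 1) =>
      (∑ s, (k s : ℕ)) = n ∧ (∑ s, ((k s : ℕ) : ℝ) * o s) < v t),
    Nat.multinomial Finset.univ (fun s => (k s : ℕ))

/-- The level set `{ ℓ < w : f ℓ = t }`; with `f = IStep` this is `IA_{n,t}`, with
`f = IWeight` this is `IB_{n,t}`. -/
def levelSet (w : ℕ) (f : ℕ → ℕ) (t : ℕ) : Finset ℕ :=
  (Finset.range w).filter fun ℓ => f ℓ = t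

/-- The set `B_{n,t,ξ,ζ}` from the binary-search decomposition of `IB_{n,t} ∩ {0,…,ξ}`. -/
def Bzeta (w : ℕ) (IBt : Finset ℕ) (ξ ζ : ℕ) : Finset ℕ :=
  if bitOf w ξ ζ = 0 then ∅
  else (IBt.filter fun ℓ =>
        bitOf w ℓ ζ = 0 ∧ ∀ j, 1 ≤ j → j < ζ → bitOf w ℓ j = bitOf w ξ j) ∪
    (if ξ ∈ IBt ∧ ∀ j, ζ < j → j ≤ w → bitOf w ξ j = 0 then {ξ} else ∅)
/-! ### digit basics -/

/-- the floor-based digit extractor -/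
def fl (W : ℕ) (x : ℝ) : ℕ := ⌊x * 2 ^ W⌋₊

lemma eps_eq_bitOf_fl {W j : ℕ} (hjW : j ≤ W) (x : ℝ) :
    eps j x = bitOf W (fl W x) j := by
  have h2 : ((2:ℝ) ^ (W - j) : ℝ) ≠ 0 := by positivity
  have hx : x * 2 ^ j = x * 2 ^ W / ((2:ℕ) ^ (W - j) : ℕ) := by
    push_cast
    rw [eq_div_iff h2, mul_assoc, ← pow_add]
    congr 2
    omega
  rw [eps, Int.floor_toNat, hx, Nat.floor_div_natCast, bitOf, fl]

lemma fl_lt {W : ℕ} {x : ℝ} (hx0 : 0 ≤ x) (hx : x < 1) : fl W x < 2 ^ W := by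
  have : x * 2 ^ W < 2 ^ W := by
    nlinarith [pow_pos (by norm_num : (0:ℝ) < 2) W]
  rw [fl, Nat.floor_lt (mul_nonneg hx0 (by positivity))]
  calc x * 2 ^ W < 1 * 2 ^ W := by nlinarith [pow_pos (by norm_num : (0:ℝ) < 2) W]
  _ = ((2 ^ W : ℕ) : ℝ) := by push_cast; ring

lemma mem_D_iff {M n ℓ : ℕ} (hw : 1 ≤ n * (M + 1)) (hℓ : ℓ < 2 ^ (n * (M + 1))) {x : ℝ} :
    x ∈ D M n ℓ ↔ x ∈ Ioo (0:ℝ) 1 ∧ fl (n * (M + 1)) x = ℓ := by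
  set W := n * (M + 1) with hW
  have hWpos : (0:ℝ) < 2 ^ W := by positivity
  have hWinv : ((2:ℝ) ^ W)⁻¹ ≤ 1 := by
    rw [inv_le_one_iff₀]; right; exact one_le_pow₀ (by norm_num)
  rcases Nat.eq_zero_or_pos ℓ with h0 | hpos
  · subst h0
    simp only [D, if_pos rfl]
    constructor
    · rintro ⟨h1, h2⟩
      have hx1 : x < 1 := lt_of_lt_of_le h2 hWinv
      refine ⟨⟨h1, hx1⟩, ?_⟩
      rw [fl, Nat.floor_eq_zero]
      calc x * 2 ^ W < ((2:ℝ)^W)⁻¹ * 2 ^ W := by gcongr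
      _ = 1 := by field_simp
    · rintro ⟨⟨h1, h2⟩, h3⟩
      rw [fl, Nat.floor_eq_zero] at h3
      refine ⟨h1, ?_⟩
      rw [← lt_div_iff₀ hWpos] at h3
      simpa [div_eq_mul_inv] using h3
  · have hℓ0 : ℓ ≠ 0 := hpos.ne'
    simp only [D, if_neg hℓ0]
    constructor
    · rintro ⟨h1, h2⟩
      have hx0 : (0:ℝ) < x := lt_of_lt_of_le (by positivity) h1
      have hx1 : x < 1 := by
        have hle : (ℓ:ℝ) + 1 ≤ (2:ℝ) ^ W := by
          have h' : (ℓ + 1 : ℕ) ≤ 2 ^ W := hℓ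
          calc ((ℓ:ℝ)+1) = ((ℓ+1 : ℕ) : ℝ) := by push_cast; ring
          _ ≤ ((2^W : ℕ) : ℝ) := by exact_mod_cast h'
          _ = (2:ℝ)^W := by push_cast; ring
        have : ((ℓ:ℝ) + 1) * ((2:ℝ) ^ W)⁻¹ ≤ 1 := by
          calc ((ℓ:ℝ) + 1) * ((2:ℝ) ^ W)⁻¹ ≤ (2:ℝ)^W * ((2:ℝ) ^ W)⁻¹ := by gcongr
          _ = 1 := by field_simp
        exact lt_of_lt_of_le h2 this
      refine ⟨⟨hx0, hx1⟩, ?_⟩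
      rw [fl, Nat.floor_eq_iff' hℓ0]
      constructor
      · calc (ℓ:ℝ) = (ℓ:ℝ) * ((2:ℝ)^W)⁻¹ * 2^W := by field_simp
        _ ≤ x * 2^W := by gcongr
      · calc x * 2^W < ((ℓ:ℝ)+1) * ((2:ℝ)^W)⁻¹ * 2^W := by gcongr
        _ = (ℓ:ℝ) + 1 := by field_simp
    · rintro ⟨⟨h1, h2⟩, h3⟩
      rw [fl, Nat.floor_eq_iff' hℓ0] at h3
      constructor
      · calc (ℓ:ℝ) * ((2:ℝ)^W)⁻¹ ≤ x * 2^W * ((2:ℝ)^W)⁻¹ := by gcongr; exact h3.1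
        _ = x := by field_simp
      · calc x = x * 2^W * ((2:ℝ)^W)⁻¹ := by field_simp
        _ < ((ℓ:ℝ)+1) * ((2:ℝ)^W)⁻¹ := by gcongr; exact h3.2

lemma mem_D_self {M n : ℕ} (hw : 1 ≤ n * (M + 1)) {x : ℝ} (hx : x ∈ Ioo (0:ℝ) 1) :
    x ∈ D M n (fl (n * (M + 1)) x) :=
  (mem_D_iff hw (fl_lt hx.1.le hx.2)).2 ⟨hx, rfl⟩

/-! ### canonical points -/

def pt (N c : ℕ) : ℝ := (2 * c + 1) / 2 ^ (N + 1)

lemma pt_mem {N c : ℕ} (hc : c < 2 ^ N) : pt N c ∈ Ioo (0:ℝ) 1 := by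
  constructor
  · rw [pt]; positivity
  · rw [pt, div_lt_one (by positivity)]
    have : 2 * c + 1 < 2 ^ (N + 1) := by
      have := hc; rw [pow_succ]; omega
    calc (2 * (c:ℝ) + 1) = ((2 * c + 1 : ℕ) : ℝ) := by push_cast; ring
    _ < ((2 ^ (N+1) : ℕ) : ℝ) := by exact_mod_cast this
    _ = (2:ℝ) ^ (N+1) := by push_cast; ring

lemma fl_pt {N c : ℕ} : fl (N + 1) (pt N c) = 2 * c + 1 := by
  have : pt N c * 2 ^ (N + 1) = ((2 * c + 1 : ℕ) : ℝ) := by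
    rw [pt, div_mul_cancel₀ _ (by positivity : ((2:ℝ)^(N+1)) ≠ 0)]; push_cast; ring
  rw [fl, this, Nat.floor_natCast]

lemma eps_pt {N c j : ℕ} (hj1 : 1 ≤ j) (hj : j ≤ N) :
    eps j (pt N c) = bitOf N c j := by
  rw [eps_eq_bitOf_fl (show j ≤ N + 1 by omega), fl_pt, bitOf, bitOf]
  have h1 : N + 1 - j = (N - j) + 1 := by omega
  rw [h1, pow_succ, mul_comm ((2:ℕ)^(N-j)) 2, ← Nat.div_div_eq_div_mul]
  congr 2
  omega

/-! ### digit uniqueness and sums -/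

lemma baseDigits_inj (m : ℕ) : ∀ (c a b : ℕ), a < m ^ c → b < m ^ c →
    (∀ i < c, a / m ^ i % m = b / m ^ i % m) → a = b := by
  intro c
  induction c with
  | zero => intro a b ha hb _; simp at ha hb; omega
  | succ c ih =>
    intro a b ha hb h
    rcases Nat.eq_zero_or_pos m with hm | hm
    · subst hm; simp at ha
    have h0 : a % m = b % m := by simpa using h 0 (by omega)
    have hd : a / m = b / m := by
      refine ih (a / m) (b / m) ?_ ?_ ?_
      · exact Nat.div_lt_of_lt_mul (by rw [← pow_succ'] ; exact ha)
      · exact Nat.div_lt_of_lt_mul (by rw [← pow_succ'] ; exact hb)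
      · intro i hi
        have e : ∀ x : ℕ, x / m / m ^ i = x / m ^ (i + 1) := by
          intro x; rw [Nat.div_div_eq_div_mul, ← pow_succ']
        rw [e, e]; exact h (i + 1) (by omega)
    have ha' := Nat.div_add_mod a m
    have hb' := Nat.div_add_mod b m
    rw [← ha', ← hb', hd, h0]

lemma bitOf_inj {W a b : ℕ} (ha : a < 2 ^ W) (hb : b < 2 ^ W)
    (h : ∀ j, 1 ≤ j → j ≤ W → bitOf W a j = bitOf W b j) : a = b := by
  refine baseDigits_inj 2 W a b ha hb ?_
  intro i hi
  have := h (W - i) (by omega) (by omega)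
  rw [bitOf, bitOf] at this
  have e : W - (W - i) = i := by omega
  rwa [e] at this

lemma sum_two_pow_le (N : ℕ) (e : ℕ → ℕ) (he : ∀ k, e k ≤ 1) :
    (∑ j ∈ Finset.range N, e j * 2 ^ j) < 2 ^ N := by
  induction N with
  | zero => simp
  | succ N ih =>
    rw [Finset.sum_range_succ, pow_succ]
    have h2 : e N * 2 ^ N ≤ 1 * 2 ^ N := Nat.mul_le_mul_right _ (he N)
    omega

lemma lowdigits : ∀ (k : ℕ) (e : ℕ → ℕ), (∀ j, e j ≤ 1) → ∀ (N : ℕ), k < N →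
    (∑ j ∈ Finset.range N, e j * 2 ^ j) / 2 ^ k % 2 = e k := by
  intro k
  induction k with
  | zero =>
    intro e he N hN
    obtain ⟨N', rfl⟩ : ∃ N', N = N' + 1 := ⟨N - 1, by omega⟩
    rw [Finset.sum_range_succ']
    have hrw : ∀ j, e (j+1) * 2^(j+1) = 2 * (e (j+1) * 2^j) := by intro j; ring
    simp only [hrw, ← Finset.mul_sum, pow_zero, mul_one, Nat.div_one]
    rw [Nat.mul_add_mod]
    have := he 0; omega
  | succ k ih =>
    intro e he N hN
    obtain ⟨N', rfl⟩ : ∃ N', N = N' + 1 := ⟨N - 1, by omega⟩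
    rw [Finset.sum_range_succ']
    have hrw : ∀ j, e (j+1) * 2^(j+1) = 2 * (e (j+1) * 2^j) := by intro j; ring
    simp only [hrw, ← Finset.mul_sum, pow_zero, mul_one]
    have h2 : (2 * (∑ j ∈ Finset.range N', e (j+1) * 2^j) + e 0) / 2 ^ (k+1)
        = (∑ j ∈ Finset.range N', e (j+1) * 2^j) / 2 ^ k := by
    
      rw [pow_succ', ← Nat.div_div_eq_div_mul]
      congr 1
      have := he 0; omega
    rw [h2]
    exact ih (fun j => e (j+1)) (fun j => he (j+1)) N' (by omega)

/-! ### jidx -/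

lemma jidx_base_succ (M i : ℕ) :
    (i+1) * ((i+1) - 1) * (M + 1) / 2 = i * (i - 1) * (M + 1) / 2 + i * (M+1) := by
  rcases Nat.eq_zero_or_pos i with h | h
  · subst h; simp
  obtain ⟨k, rfl⟩ : ∃ k, i = k + 1 := ⟨i - 1, by omega⟩
  have h1 : (k+1+1) * ((k+1+1) - 1) * (M+1) = (k+1) * k * (M+1) + 2 * ((k+1) * (M+1)) := by
    simp only [Nat.add_sub_cancel]; ring
  rw [h1, Nat.add_mul_div_left _ _ (by norm_num : 0 < 2)]
  simp

lemma jidx_mono_i {M i i' : ℕ} (h : i ≤ i') : 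
    i * (i - 1) * (M + 1) / 2 ≤ i' * (i' - 1) * (M + 1) / 2 := by
  apply Nat.div_le_div_right
  apply Nat.mul_le_mul_right
  apply Nat.mul_le_mul h
  omega

lemma jidx_lt_jidx {M i r i' r' : ℕ} (hi : 1 ≤ i) (hr : 1 ≤ r) (hrM : r ≤ M + 1)
    (hr' : 1 ≤ r') (hlex : i < i' ∨ (i = i' ∧ r < r')) : jidx M i r < jidx M i' r' := by
  rcases hlex with hii | ⟨rfl, hrr⟩
  · have key : jidx M i r < jidx M (i+1) 1 := by
      rw [jidx, jidx, jidx_base_succ]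
      have : r * i ≤ (M+1) * i := Nat.mul_le_mul_right _ hrM
      have : i * (M+1) = (M+1) * i := by ring
      omega
    calc jidx M i r < jidx M (i+1) 1 := key
    _ ≤ jidx M i' r' := by
      rw [jidx, jidx]
      have h1 := jidx_mono_i (M := M) (show i+1 ≤ i' by omega)
      have h2 : 1 * (i+1) ≤ r' * i' := by
        have : 1 * (i+1) ≤ 1 * i' := by omega
        calc 1 * (i+1) ≤ 1 * i' := this
        _ ≤ r' * i' := Nat.mul_le_mul_right _ hr'
      omega
  · rw [jidx, jidx]
    have : r * i < r' * i := by
      apply Nat.mul_lt_mul_of_lt_of_le hrr (le_refl i) (by omega)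
    omega

lemma jidx_le_jidx {M i r i' r' : ℕ} (hi : 1 ≤ i) (hr : 1 ≤ r) (hrM : r ≤ M + 1)
    (hr' : 1 ≤ r') (hii : i ≤ i') (hlex : i = i' → r ≤ r') : jidx M i r ≤ jidx M i' r' := by
  rcases Nat.lt_or_ge i i' with h | h
  · exact (jidx_lt_jidx hi hr hrM hr' (Or.inl h)).le
  · have : i = i' := by omega
    subst this
    rcases Nat.lt_or_ge r r' with h2 | h2
    · exact (jidx_lt_jidx hi hr hrM hr' (Or.inr ⟨rfl, h2⟩)).le
    · have : r = r' := by omega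
      subst this; rfl

lemma jidx_inj {M i r i' r' : ℕ} (hi : 1 ≤ i) (hr : 1 ≤ r) (hrM : r ≤ M + 1)
    (hi' : 1 ≤ i') (hr' : 1 ≤ r') (hrM' : r' ≤ M + 1)
    (h : jidx M i r = jidx M i' r') : i = i' ∧ r = r' := by
  by_contra hc
  have hne : i < i' ∨ (i = i' ∧ r < r') ∨ i' < i ∨ (i' = i ∧ r' < r) := by
    rcases Nat.lt_trichotomy i i' with h1 | h1 | h1
    · exact Or.inl h1
    · rcases Nat.lt_trichotomy r r' with h2 | h2 | h2
      · exact Or.inr (Or.inl ⟨h1, h2⟩)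
      · exact absurd ⟨h1, h2⟩ hc
      · exact Or.inr (Or.inr (Or.inr ⟨h1.symm, h2⟩))
    · exact Or.inr (Or.inr (Or.inl h1))
  rcases hne with h1 | h1 | h1 | h1
  · exact absurd h (jidx_lt_jidx hi hr hrM hr' (Or.inl h1)).ne
  · exact absurd h (jidx_lt_jidx hi hr hrM hr' (Or.inr h1)).ne
  · exact absurd h.symm (jidx_lt_jidx hi' hr' hrM' hr (Or.inl h1)).ne
  · exact absurd h.symm (jidx_lt_jidx hi' hr' hrM' hr (Or.inr h1)).ne

lemma one_le_jidx {M i r : ℕ} (hi : 1 ≤ i) (hr : 1 ≤ r) : 1 ≤ jidx M i r := by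
  rw [jidx]
  have : 1 * 1 ≤ r * i := Nat.mul_le_mul hr hi
  omega

/-! ### blocks -/

lemma bitOf_le_one (w ℓ q : ℕ) : bitOf w ℓ q ≤ 1 := by
  rw [bitOf]; omega

def blk (M n i ℓ : ℕ) : ℕ := ℓ / (2 ^ (M+1)) ^ (n - 1 - i) % 2 ^ (M+1)

lemma blk_lt (M n i ℓ : ℕ) : blk M n i ℓ < 2 ^ (M + 1) :=
  Nat.mod_lt _ (by positivity)

lemma bitOf_blk {M n i ℓ r : ℕ} (hi : i < n) (hr : 1 ≤ r) (hrM : r ≤ M + 1) :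
    bitOf (M+1) (blk M n i ℓ) r = bitOf (n * (M+1)) ℓ (i * (M+1) + r) := by
  rw [bitOf, bitOf, blk]
  set a := ℓ / (2 ^ (M+1)) ^ (n - 1 - i) with ha
  have h1 : (2:ℕ) ^ (M+1) = 2 ^ (M+1-r) * 2 ^ r := by
    rw [← pow_add]; congr 1; omega
  rw [h1, Nat.mod_mul_right_div_self]
  have h2 : a / 2 ^ (M+1-r) % 2 ^ r % 2 = a / 2 ^ (M+1-r) % 2 := by
    apply Nat.mod_mod_of_dvd
    exact dvd_pow_self 2 (by omega)
  have key : a / 2 ^ (M+1-r) = ℓ / 2 ^ (n*(M+1) - (i*(M+1)+r)) := by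
    rw [ha, Nat.div_div_eq_div_mul, ← pow_mul, ← pow_add]
    have hE : (M+1) * (n-1-i) + (M+1-r) = n*(M+1) - (i*(M+1)+r) := by
      obtain ⟨k, rfl⟩ : ∃ k, n = k + i + 1 := ⟨n - i - 1, by omega⟩
      have e2 : k + i + 1 - 1 - i = k := by omega
      rw [e2]
      have e1 : (k + i + 1) * (M+1) = k * (M+1) + i * (M+1) + (M+1) := by ring
      have e3 : (M+1) * k = k * (M+1) := by ring
      rw [e1, e3]
      generalize k * (M+1) = A
      generalize i * (M+1) = B
      omega
    rw [hE]
  rw [h2, key]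

/-! ### membership in E -/

lemma E_nonempty {M n : ℕ} (hn : 1 ≤ n) (ℓ : ℕ) : ∃ y, y ∈ E M n ℓ := by
  classical
  set w := n * (M + 1) with hw
  set N := jidx M n (M+1) with hN
  -- desired digit at position j
  set d : ℕ → ℕ := fun j =>
    if h : ∃ p : ℕ × ℕ, (p.1 ∈ Finset.Icc 1 n ∧ p.2 ∈ Finset.Icc 1 (M+1)) ∧ jidx M p.1 p.2 = j
    then bitOf w ℓ ((h.choose.1 - 1) * (M+1) + h.choose.2) else 0 with hd
  have hd1 : ∀ j, d j ≤ 1 := by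
    intro j; rw [hd]; dsimp only
    split
    · exact bitOf_le_one _ _ _
    · omega
  set c : ℕ := ∑ j ∈ Finset.range N, d (N - j) * 2 ^ j with hc
  have hcN : c < 2 ^ N := sum_two_pow_le N _ (fun k => hd1 _)
  refine ⟨pt N c, pt_mem hcN, ?_⟩
  intro i hi r hr
  rw [Finset.mem_Icc] at hi hr
  have hjle : jidx M i r ≤ N := jidx_le_jidx (by omega) (by omega) (by omega) (by omega)
    (by omega) (fun hh => by omega)
  have hjge : 1 ≤ jidx M i r := one_le_jidx (by omega) (by omega)
  rw [eps_pt hjge hjle, bitOf]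
  have hk : N - (N - jidx M i r) = jidx M i r := by omega
  have h := lowdigits (N - jidx M i r) (fun j => d (N - j)) (fun j => hd1 _) N (by omega)
  rw [hk] at h
  rw [← hc] at h
  rw [h]
  -- now evaluate d at jidx M i r
  rw [hd]; dsimp only
  have hex : ∃ p : ℕ × ℕ, (p.1 ∈ Finset.Icc 1 n ∧ p.2 ∈ Finset.Icc 1 (M+1)) ∧
      jidx M p.1 p.2 = jidx M i r :=
    ⟨(i, r), ⟨Finset.mem_Icc.2 ⟨by omega, by omega⟩, Finset.mem_Icc.2 ⟨by omega, by omega⟩⟩, rfl⟩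
  rw [dif_pos hex]
  obtain ⟨⟨hm1, hm2⟩, hm3⟩ := hex.choose_spec
  rw [Finset.mem_Icc] at hm1 hm2
  obtain ⟨h1, h2⟩ := jidx_inj (by omega) (by omega) (by omega) (by omega) (by omega) (by omega) hm3
  rw [h1, h2]

/-! ### measure lemmas -/

lemma measurableSet_D (M n ℓ : ℕ) : MeasurableSet (D M n ℓ) := by
  rw [D]; split
  · exact measurableSet_Ioo
  · exact measurableSet_Ico

lemma volume_D (M n ℓ : ℕ) : volume (D M n ℓ) = ((2:ℝ≥0∞) ^ (n * (M+1)))⁻¹ := by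
  have key : ENNReal.ofReal (((2:ℝ) ^ (n * (M+1)))⁻¹) = ((2:ℝ≥0∞) ^ (n * (M+1)))⁻¹ := by
    rw [ENNReal.ofReal_inv_of_pos (by positivity), ENNReal.ofReal_pow (by norm_num)]
    norm_num
  rw [D]; split
  · rw [Real.volume_Ioo]; rw [← key]; congr 1; ring
  · rw [Real.volume_Ico]; rw [← key]; congr 1; ring

lemma D_disjoint {M n : ℕ} (hw : 1 ≤ n * (M+1)) {ℓ ℓ' : ℕ} (hℓ : ℓ < 2 ^ (n*(M+1)))
    (hℓ' : ℓ' < 2 ^ (n*(M+1))) (hne : ℓ ≠ ℓ') : Disjoint (D M n ℓ) (D M n ℓ') := by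
  rw [Set.disjoint_left]
  intro x h1 h2
  obtain ⟨hx1, he1⟩ := (mem_D_iff hw hℓ).1 h1
  obtain ⟨hx2, he2⟩ := (mem_D_iff hw hℓ').1 h2
  exact hne (by rw [← he1, ← he2])

lemma meas_subtype (T : Set Ω) : (volume : Measure Ω) T = volume (Subtype.val '' T) :=
  (MeasurableEmbedding.subtype_coe measurableSet_Ioo).comap_apply volume T

lemma measure_fl {M n : ℕ} (hw : 1 ≤ n * (M+1)) (P : ℕ → Prop) [DecidablePred P] :
    (volume : Measure Ω) {ω : Ω | P (fl (n*(M+1)) ω.1)} =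
      (((Finset.range (2^(n*(M+1)))).filter P).card : ℝ≥0∞) * ((2:ℝ≥0∞)^(n*(M+1)))⁻¹ := by
  classical
  have h1 : {ω : Ω | P (fl (n*(M+1)) ω.1)} = Subtype.val ⁻¹' {x | P (fl (n*(M+1)) x)} := rfl
  rw [h1, meas_subtype, Subtype.image_preimage_coe]
  have h2 : Ioo (0:ℝ) 1 ∩ {x | P (fl (n*(M+1)) x)} =
      ⋃ ℓ ∈ ((Finset.range (2^(n*(M+1)))).filter P), D M n ℓ := by
    ext x
    simp only [mem_inter_iff, mem_setOf_eq, mem_iUnion, Finset.mem_filter, Finset.mem_range,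
      exists_prop]
    constructor
    · rintro ⟨hx, hP⟩
      exact ⟨fl _ x, ⟨fl_lt hx.1.le hx.2, hP⟩, mem_D_self hw hx⟩
    · rintro ⟨ℓ, ⟨hℓ, hP⟩, hD⟩
      obtain ⟨hx, hfl⟩ := (mem_D_iff hw hℓ).1 hD
      exact ⟨hx, by rwa [hfl]⟩
  rw [h2, measure_biUnion_finset ?_ (fun ℓ _ => measurableSet_D M n ℓ)]
  · rw [Finset.sum_congr rfl (fun ℓ _ => volume_D M n ℓ), Finset.sum_const, nsmul_eq_mul]
  · intro ℓ hℓ ℓ' hℓ' hne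
    rw [Finset.coe_filter, mem_setOf_eq] at hℓ hℓ'
    rw [Finset.mem_range] at hℓ hℓ'
    exact D_disjoint hw hℓ.1 hℓ'.1 hne

lemma volume_omega_univ {M n : ℕ} (hw : 1 ≤ n * (M+1)) :
    (volume : Measure Ω) univ = 1 := by
  classical
  have := measure_fl (M := M) hw (fun _ => True)
  simp only [Finset.filter_true, Finset.card_range, setOf_true] at this
  rw [this]
  rw [show (((2:ℕ)^(n*(M+1)) : ℕ) : ℝ≥0∞) = (2:ℝ≥0∞)^(n*(M+1)) by push_cast; ring]
  exact ENNReal.mul_inv_cancel (by positivity) (ENNReal.pow_ne_top ENNReal.ofNat_ne_top)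

/-! ### counting lemmas -/

lemma card_filter_range_fin (N : ℕ) (P : ℕ → Prop) [DecidablePred P]
    [DecidablePred (fun ℓ : Fin N => P ℓ.1)] :
    ((Finset.range N).filter P).card = (Finset.univ.filter (fun ℓ : Fin N => P ℓ.1)).card := by
  classical
  apply Finset.card_bij (fun (ℓ : ℕ) (h : ℓ ∈ (Finset.range N).filter P) =>
    (⟨ℓ, Finset.mem_range.1 (Finset.mem_filter.1 h).1⟩ : Fin N))
  · intro a ha
    simp only [Finset.mem_filter, Finset.mem_univ, true_and]
    exact (Finset.mem_filter.1 ha).2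
  · intro a ha b hb hab
    simpa using congrArg Fin.val hab
  · intro b hb
    refine ⟨b.1, Finset.mem_filter.2 ⟨Finset.mem_range.2 b.2, ?_⟩, rfl⟩
    simpa using (Finset.mem_filter.1 hb).2

lemma card_filter_equiv {α β : Type*} [Fintype α] [Fintype β] (e : α ≃ β)
    (Qa : α → Prop) (Qb : β → Prop) [DecidablePred Qa] [DecidablePred Qb]
    (h : ∀ a, Qa a ↔ Qb (e a)) :
    (Finset.univ.filter Qa).card = (Finset.univ.filter Qb).card := by
  apply Finset.card_bij (fun a _ => e a)
  · intro a ha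
    simp only [Finset.mem_filter, Finset.mem_univ, true_and] at *
    exact (h a).1 ha
  · intro a _ b _ hab; exact e.injective hab
  · intro b hb
    refine ⟨e.symm b, ?_, by simp⟩
    simp only [Finset.mem_filter, Finset.mem_univ, true_and] at *
    exact (h _).2 (by simpa using hb)

lemma card_pi_filter {n m : ℕ} (S : Finset (Fin n)) (Q : Fin n → Fin m → Prop)
    [∀ i, DecidablePred (Q i)]
    [DecidablePred (fun p : Fin n → Fin m => ∀ i ∈ S, Q i (p i))] :
    (Finset.univ.filter (fun p : Fin n → Fin m => ∀ i ∈ S, Q i (p i))).card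
      = (∏ i ∈ S, (Finset.univ.filter (fun s => Q i s)).card) * m ^ (n - S.card) := by
  classical
  have h1 : (Finset.univ.filter (fun p : Fin n → Fin m => ∀ i ∈ S, Q i (p i)))
      = Fintype.piFinset (fun i => if i ∈ S then Finset.univ.filter (fun s => Q i s)
          else Finset.univ) := by
    ext p
    simp only [Finset.mem_filter, Finset.mem_univ, true_and, Fintype.mem_piFinset]
    constructor
    · intro h i
      by_cases hi : i ∈ S
      · rw [if_pos hi]; simp only [Finset.mem_filter, Finset.mem_univ, true_and]; exact h i hi
      · rw [if_neg hi]; exact Finset.mem_univ _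
    · intro h i hi
      have := h i
      rw [if_pos hi] at this
      simpa using this
  rw [h1, Fintype.card_piFinset]
  rw [← Finset.prod_filter_mul_prod_filter_not Finset.univ (· ∈ S)]
  have h2 : Finset.univ.filter (· ∈ S) = S := by
    ext i; simp
  rw [h2]
  congr 1
  · exact Finset.prod_congr rfl (fun i hi => by rw [if_pos hi])
  · rw [Finset.prod_congr rfl (fun i hi => by
      rw [if_neg (by simpa using (Finset.mem_filter.1 hi).2)]), Finset.prod_const]
    congr 1
    · exact Finset.card_fin m
    · rw [Finset.filter_not, Finset.card_sdiff_of_subset (by simp [h2])]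
      simp [h2]

/-! ### values of O, blocks as equiv -/

def ovF (M : ℕ) (O : ℝ → ℝ) (s : ℕ) : ℝ := O (pt (M+1) s)

lemma two_pow_w (M n : ℕ) : 2 ^ (n * (M+1)) = (2 ^ (M+1)) ^ n := by rw [mul_comm, pow_mul]

section SetupLemmas
variable {M : ℕ} {O : ℝ → ℝ} {o : Fin (2 ^ (M + 1)) → ℝ} {R : ℕ → ℝ → ℝ} {n : ℕ}

lemma eps_ptm {M s r : ℕ} (hr : 1 ≤ r) (hrM : r ≤ M+1) :
    eps r (pt (M+1) s) = bitOf (M+1) s r := eps_pt hr hrM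

lemma ovF_inj (hS : Setup M O o R) {s s' : ℕ} (hs : s < 2^(M+1)) (hs' : s' < 2^(M+1))
    (h : ovF M O s = ovF M O s') : s = s' := by
  have h2 := hS.O_inj _ (pt_mem hs) _ (pt_mem hs') h
  apply bitOf_inj hs hs'
  intro j hj1 hjW
  have h3 := h2 j (Finset.mem_Icc.2 ⟨hj1, hjW⟩)
  rwa [eps_ptm hj1 hjW, eps_ptm hj1 hjW] at h3

lemma O_eq_ovF (hS : Setup M O o R) {x : ℝ} (hx : x ∈ Ioo (0:ℝ) 1) :
    O x = ovF M O (fl (M+1) x) := by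
  apply hS.O_dep _ hx _ (pt_mem (fl_lt hx.1.le hx.2))
  intro r hr
  rw [Finset.mem_Icc] at hr
  rw [eps_ptm hr.1 hr.2, eps_eq_bitOf_fl hr.2]

lemma o_eq_ovF (hS : Setup M O o R) (s : Fin (2^(M+1))) :
    ∃ s' : Fin (2^(M+1)), ovF M O s'.1 = o s := by
  have h : o s ∈ O '' Ioo (0:ℝ) 1 := hS.o_range ▸ mem_range_self s
  obtain ⟨x, hx, hOx⟩ := h
  exact ⟨⟨fl (M+1) x, fl_lt hx.1.le hx.2⟩, by rw [← O_eq_ovF hS hx, hOx]⟩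

lemma ovF_eq_o (hS : Setup M O o R) {s : ℕ} (hs : s < 2^(M+1)) :
    ∃ t : Fin (2^(M+1)), o t = ovF M O s := by
  have h : ovF M O s ∈ Set.range o := by
    rw [hS.o_range]; exact ⟨pt (M+1) s, pt_mem hs, rfl⟩
  exact h

lemma R_on_E (hS : Setup M O o R) (hn : 1 ≤ n) {ℓ : ℕ} {y : ℝ} (hy : y ∈ E M n ℓ)
    {i : ℕ} (hi : i < n) : R (i+1) y = ovF M O (blk M n i ℓ) := by
  apply hS.R_def (i+1) (by omega) y hy.1 _ (pt_mem (blk_lt M n i ℓ))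
  intro r hr
  rw [Finset.mem_Icc] at hr
  rw [eps_ptm hr.1 hr.2, bitOf_blk hi hr.1 hr.2]
  have h2 := hy.2 (i+1) (Finset.mem_Icc.2 ⟨by omega, by omega⟩) r (Finset.mem_Icc.2 hr)
  rw [h2]
  congr 2

end SetupLemmas

def blkF (M n : ℕ) (ℓ : Fin (2^(n*(M+1)))) : Fin n → Fin (2^(M+1)) :=
  fun i => ⟨blk M n i.1 ℓ.1, blk_lt M n i.1 ℓ.1⟩

lemma blkF_injective (M n : ℕ) : Function.Injective (blkF M n) := by
  intro ℓ ℓ' h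
  have hl : ℓ.1 < (2^(M+1))^n := by rw [← two_pow_w]; exact ℓ.2
  have hl' : ℓ'.1 < (2^(M+1))^n := by rw [← two_pow_w]; exact ℓ'.2
  apply Fin.ext
  apply baseDigits_inj (2^(M+1)) n _ _ hl hl'
  intro t ht
  have h2 := congrArg (fun f => (f (⟨n-1-t, by omega⟩ : Fin n) : Fin _).1) h
  simp only [blkF] at h2
  have e : n - 1 - (n - 1 - t) = t := by omega
  simpa [blk, e] using h2

def blkE (M n : ℕ) : Fin (2^(n*(M+1))) ≃ (Fin n → Fin (2^(M+1))) :=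
  Equiv.ofBijective (blkF M n)
    ((Fintype.bijective_iff_injective_and_card _).2 ⟨blkF_injective M n,
      by simp [two_pow_w, Fintype.card_fun]⟩)

lemma blkE_apply (M n : ℕ) (ℓ : Fin (2^(n*(M+1)))) (i : Fin n) :
    ((blkE M n ℓ) i : ℕ) = blk M n i.1 ℓ.1 := rfl

/-! ### the canonical tuple of a permutation -/

lemma fl_pt_self (N c : ℕ) : fl N (pt N c) = c := by
  have h : pt N c * 2^N = ((2*c+1 : ℕ):ℝ) / ((2:ℕ):ℝ) := by
    rw [pt]; push_cast; rw [pow_succ]; field_simp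
  rw [fl, h, Nat.floor_div_natCast, Nat.floor_natCast]
  omega

def flF {M n : ℕ} (hw : 1 ≤ n*(M+1)) (ω : Ω) : Fin (2^(n*(M+1))) :=
  ⟨fl (n*(M+1)) ω.1, fl_lt ω.2.1.le ω.2.2⟩

def TupOf (M n : ℕ) (O : ℝ → ℝ) (hw : 1 ≤ n*(M+1)) (π : Equiv.Perm (Fin (2^(n*(M+1)))))
    : Fin n → Ω → ℝ :=
  fun i ω => ovF M O ((blkE M n (π (flF hw ω))) i).1

lemma ptD_mem {M n : ℕ} (hw : 1 ≤ n*(M+1)) (ℓ : Fin (2^(n*(M+1)))) :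
    pt (n*(M+1)) ℓ.1 ∈ D M n ℓ.1 :=
  (mem_D_iff hw ℓ.2).2 ⟨pt_mem ℓ.2, fl_pt_self _ _⟩

lemma flF_eq_of_mem_D {M n : ℕ} (hw : 1 ≤ n*(M+1)) {ℓ : Fin (2^(n*(M+1)))} {ω : Ω}
    (h : (ω : ℝ) ∈ D M n ℓ.1) : flF hw ω = ℓ :=
  Fin.ext ((mem_D_iff hw ℓ.2).1 h).2

lemma measure_TupOf_inter {M n : ℕ} (O : ℝ → ℝ) (hw : 1 ≤ n*(M+1))
    (π : Equiv.Perm (Fin (2^(n*(M+1))))) (Sf : Finset (Fin n)) (A : Fin n → Set ℝ) :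
    (volume : Measure Ω) (⋂ i ∈ Sf, TupOf M n O hw π i ⁻¹' A i)
    = ((Finset.univ.filter
          (fun p : Fin n → Fin (2^(M+1)) => ∀ i ∈ Sf, ovF M O (p i).1 ∈ A i)).card : ℝ≥0∞)
        * ((2:ℝ≥0∞)^(n*(M+1)))⁻¹ := by
  classical
  set P : ℕ → Prop := fun ℓ => ∃ h : ℓ < 2^(n*(M+1)),
      ∀ i ∈ Sf, ovF M O ((blkE M n (π ⟨ℓ, h⟩)) i).1 ∈ A i with hP
  clear_value P
  have h1 : (⋂ i ∈ Sf, TupOf M n O hw π i ⁻¹' A i) = {ω : Ω | P (fl (n*(M+1)) ω.1)} := by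
    ext ω
    simp only [mem_iInter, mem_preimage, mem_setOf_eq, hP, TupOf]
    constructor
    · intro h
      exact ⟨fl_lt ω.2.1.le ω.2.2, fun i hi => h i hi⟩
    · rintro ⟨h, h2⟩
      exact fun i hi => h2 i hi
  rw [h1, measure_fl hw]
  have h4 : ((Finset.range (2^(n*(M+1)))).filter P).card
      = (Finset.univ.filter
          (fun p : Fin n → Fin (2^(M+1)) => ∀ i ∈ Sf, ovF M O (p i).1 ∈ A i)).card := by
    rw [card_filter_range_fin]
    have h3 : (Finset.univ.filter (fun ℓ : Fin (2^(n*(M+1))) => P ℓ.1))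
        = (Finset.univ.filter (fun ℓ : Fin (2^(n*(M+1))) =>
            ∀ i ∈ Sf, ovF M O ((blkE M n (π ℓ)) i).1 ∈ A i)) := by
      apply Finset.filter_congr
      intro ℓ _
      simp only [hP]
      constructor
      · rintro ⟨h, h2⟩; exact h2
      · intro h2; exact ⟨ℓ.2, h2⟩
    rw [h3]
    exact card_filter_equiv (π.trans (blkE M n)) _
      (fun p => ∀ i ∈ Sf, ovF M O (p i).1 ∈ A i) (fun a => Iff.rfl)
  rw [h4]

lemma measure_TupOf_single {M n : ℕ} (O : ℝ → ℝ) (hw : 1 ≤ n*(M+1))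
    (π : Equiv.Perm (Fin (2^(n*(M+1))))) (i : Fin n) (A : Set ℝ) :
    (volume : Measure Ω) (TupOf M n O hw π i ⁻¹' A)
    = ((Finset.univ.filter
          (fun p : Fin n → Fin (2^(M+1)) => ovF M O (p i).1 ∈ A)).card : ℝ≥0∞)
        * ((2:ℝ≥0∞)^(n*(M+1)))⁻¹ := by
  classical
  have h := measure_TupOf_inter O hw π {i} (fun _ => A)
  simp only [Finset.mem_singleton, Set.iInter_iInter_eq_left] at h
  rw [h]
  congr 3
  apply Finset.filter_congr
  intro p _
  constructor
  · intro h2; exact h2 i rfl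
  · intro h2 j hj; subst hj; exact h2

/-! ### ENNReal algebra -/

lemma enn_pow_mul_inv (m a b : ℕ) (hm : m ≠ 0) :
    ((m:ℝ≥0∞))^a * (((m:ℝ≥0∞))^(a+b))⁻¹ = (((m:ℝ≥0∞))^b)⁻¹ := by
  have hm0 : (m:ℝ≥0∞) ≠ 0 := Nat.cast_ne_zero.2 hm
  have hmt : (m:ℝ≥0∞) ≠ ⊤ := ENNReal.natCast_ne_top m
  rw [pow_add, ENNReal.mul_inv (Or.inl (pow_ne_zero a hm0)) (Or.inl (ENNReal.pow_ne_top hmt)),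
    ← mul_assoc, ENNReal.mul_inv_cancel (pow_ne_zero a hm0) (ENNReal.pow_ne_top hmt), one_mul]

lemma two_pow_w_enn (M n : ℕ) :
    ((2:ℝ≥0∞)^(n*(M+1))) = (((2^(M+1) : ℕ)) : ℝ≥0∞)^n := by
  push_cast
  rw [mul_comm, pow_mul]

lemma final_dist_alg {M n : ℕ} (hn : 1 ≤ n) :
    ((((2^(M+1))^(n-1) : ℕ)) : ℝ≥0∞) * ((2:ℝ≥0∞)^(n*(M+1)))⁻¹ = ((2:ℝ≥0∞)^(M+1))⁻¹ := by
  have h := enn_pow_mul_inv (2^(M+1)) (n-1) 1 (by positivity)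
  rw [pow_one] at h
  have hx : (n-1)+1 = n := by omega
  rw [hx] at h
  rw [two_pow_w_enn, Nat.cast_pow, h]
  congr 1
  push_cast
  ring

lemma measure_prod_eq {M n : ℕ} (hn : 1 ≤ n) (c : Fin n → ℕ) (Sf : Finset (Fin n)) :
    (((∏ i ∈ Sf, c i) * (2^(M+1)) ^ (n - Sf.card) : ℕ) : ℝ≥0∞) * ((2:ℝ≥0∞)^(n*(M+1)))⁻¹
    = ∏ i ∈ Sf, (((c i * (2^(M+1)) ^ (n-1) : ℕ) : ℝ≥0∞) * ((2:ℝ≥0∞)^(n*(M+1)))⁻¹) := by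
  have hk : Sf.card ≤ n := by
    have := Finset.card_le_univ Sf
    simpa using this
  have hm : (2:ℕ)^(M+1) ≠ 0 := by positivity
  have h1 := enn_pow_mul_inv (2^(M+1)) (n - Sf.card) Sf.card hm
  have h2 := enn_pow_mul_inv (2^(M+1)) (n-1) 1 hm
  rw [pow_one] at h2
  have e1 : n - Sf.card + Sf.card = n := by omega
  have e2 : n - 1 + 1 = n := by omega
  rw [e1] at h1
  rw [e2] at h2
  rw [two_pow_w_enn]
  push_cast at h1 h2 ⊢
  rw [mul_assoc, h1]
  have hR : ∀ i ∈ Sf, (c i : ℝ≥0∞) * ((2:ℝ≥0∞)^(M+1))^(n-1) * (((2:ℝ≥0∞)^(M+1))^n)⁻¹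
      = (c i : ℝ≥0∞) * ((2:ℝ≥0∞)^(M+1))⁻¹ := by
    intro i _
    rw [mul_assoc, h2]
  rw [Finset.prod_congr rfl hR, Finset.prod_mul_distrib, Finset.prod_const, ← ENNReal.inv_pow]

/-! ### sums over Icc vs Fin -/

lemma sum_Icc_one (n : ℕ) (f : ℕ → ℝ) :
    ∑ i ∈ Finset.Icc 1 n, f i = ∑ i : Fin n, f (i.1+1) := by
  induction n with
  | zero => simp
  | succ k ih =>
    rw [Finset.sum_Icc_succ_top (by omega), ih, Fin.sum_univ_castSucc]
    simp

/-! ### the forward direction: TupOf is a good tuple -/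

section Forward
variable {M : ℕ} {O : ℝ → ℝ} {o : Fin (2 ^ (M + 1)) → ℝ} {R : ℕ → ℝ → ℝ} {n : ℕ}

lemma measure_TupOf_single' (O : ℝ → ℝ) (hw : 1 ≤ n*(M+1))
    (π : Equiv.Perm (Fin (2^(n*(M+1))))) (i : Fin n) (A : Set ℝ) :
    (volume : Measure Ω) (TupOf M n O hw π i ⁻¹' A)
    = (((Finset.univ.filter (fun s : Fin (2^(M+1)) => ovF M O s.1 ∈ A)).card
        * (2^(M+1))^(n-1) : ℕ) : ℝ≥0∞) * ((2:ℝ≥0∞)^(n*(M+1)))⁻¹ := by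
  classical
  rw [measure_TupOf_single O hw π i A]
  congr 2
  have h1 : (Finset.univ.filter (fun p : Fin n → Fin (2^(M+1)) => ovF M O (p i).1 ∈ A))
      = (Finset.univ.filter (fun p : Fin n → Fin (2^(M+1)) =>
          ∀ j ∈ ({i} : Finset (Fin n)), ovF M O (p j).1 ∈ A)) := by
    apply Finset.filter_congr
    intro p _
    simp
  rw [h1, card_pi_filter ({i} : Finset (Fin n)) (fun _ s => ovF M O s.1 ∈ A),
    Finset.prod_singleton, Finset.card_singleton]

lemma good_TupOf (hS : Setup M O o R) (hn : 1 ≤ n) (hw : 1 ≤ n*(M+1))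
    (π : Equiv.Perm (Fin (2^(n*(M+1))))) (hπ : Admissible M R n π) :
    GoodTuple M o R n (TupOf M n O hw π) := by
  classical
  refine ⟨?ind, ?trim, ?dist, ?sum⟩
  case ind =>
    rw [iIndepFun_iff_measure_inter_preimage_eq_mul]
    intro Sf sets _
    rw [measure_TupOf_inter O hw π Sf sets,
      card_pi_filter Sf (fun i s => ovF M O s.1 ∈ sets i),
      Finset.prod_congr rfl (fun i (_ : i ∈ Sf) => measure_TupOf_single' O hw π i (sets i))]
    exact measure_prod_eq hn _ Sf
  case trim =>
    intro i ℓ hℓ x y hx hy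
    have h1 : flF hw x = ⟨ℓ, hℓ⟩ := flF_eq_of_mem_D hw (ℓ := ⟨ℓ, hℓ⟩) hx
    have h2 : flF hw y = ⟨ℓ, hℓ⟩ := flF_eq_of_mem_D hw (ℓ := ⟨ℓ, hℓ⟩) hy
    rw [TupOf, TupOf, h1, h2]
  case dist =>
    intro i s
    have h0 : {ω : Ω | TupOf M n O hw π i ω = o s} = TupOf M n O hw π i ⁻¹' {o s} := rfl
    rw [h0, measure_TupOf_single' O hw π i {o s}]
    obtain ⟨s', hs'⟩ := o_eq_ovF hS s
    have h1 : (Finset.univ.filter (fun t : Fin (2^(M+1)) => ovF M O t.1 ∈ ({o s} : Set ℝ)))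
        = {s'} := by
      ext t
      simp only [Finset.mem_filter, Finset.mem_univ, true_and, mem_singleton_iff,
        Finset.mem_singleton]
      constructor
      · intro h
        exact Fin.ext (ovF_inj hS t.2 s'.2 (by rw [h, hs']))
      · intro h; subst h; exact hs'
    rw [Finset.card_eq_one.2 ⟨s', by convert h1⟩, one_mul]
    exact final_dist_alg hn
  case sum =>
    intro ω
    obtain ⟨y, hy⟩ := E_nonempty (M := M) hn ((π (flF hw ω) : Fin _) : ℕ)
    have hadm := hπ (flF hw ω) ω.1 (mem_D_self hw ω.2) y hy
    rw [hadm]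
    have hS' : S R n y = ∑ i : Fin n, R (i.1+1) y := sum_Icc_one n (fun i => R i y)
    rw [hS']
    apply Finset.sum_congr rfl
    intro i _
    rw [R_on_E hS hn hy i.2]
    rfl

end Forward

/-! ### the backward direction -/

section Backward
variable {M : ℕ} {O : ℝ → ℝ} {o : Fin (2 ^ (M + 1)) → ℝ} {R : ℕ → ℝ → ℝ} {n : ℕ}

def ptD {M n : ℕ} (ℓ : Fin (2^(n*(M+1)))) : Ω := ⟨pt (n*(M+1)) ℓ.1, pt_mem ℓ.2⟩

lemma ptD_mem_D {M n : ℕ} (hw : 1 ≤ n*(M+1)) (ℓ : Fin (2^(n*(M+1)))) :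
    ((ptD ℓ : Ω) : ℝ) ∈ D M n ℓ.1 := ptD_mem hw ℓ

lemma flF_ptD {M n : ℕ} (hw : 1 ≤ n*(M+1)) (ℓ : Fin (2^(n*(M+1)))) :
    flF hw (ptD ℓ) = ℓ := Fin.ext (fl_pt_self _ _)

lemma tup_eq_val (hw : 1 ≤ n*(M+1)) (Tup : Fin n → Ω → ℝ)
    (htrim : ∀ i : Fin n, ∀ ℓ < 2^(n*(M+1)), ∀ x y : Ω,
      (x:ℝ) ∈ D M n ℓ → (y:ℝ) ∈ D M n ℓ → Tup i x = Tup i y)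
    (i : Fin n) (ω : Ω) : Tup i ω = Tup i (ptD (flF hw ω)) := by
  apply htrim i (flF hw ω).1 (flF hw ω).2
  · exact mem_D_self hw ω.2
  · exact ptD_mem_D hw (flF hw ω)

lemma nat_of_mul_inv_pow {w a b : ℕ}
    (h : (a:ℝ≥0∞) * ((2:ℝ≥0∞)^w)⁻¹ = (b:ℝ≥0∞) * ((2:ℝ≥0∞)^w)⁻¹) : a = b := by
  have h0 : ((2:ℝ≥0∞)^w)⁻¹ ≠ 0 := ENNReal.inv_ne_zero.2 (ENNReal.pow_ne_top ENNReal.ofNat_ne_top)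
  have ht : ((2:ℝ≥0∞)^w)⁻¹ ≠ ⊤ :=
    ENNReal.inv_ne_top.2 (pow_ne_zero w (by norm_num : (2:ℝ≥0∞) ≠ 0))
  exact_mod_cast (ENNReal.mul_left_inj h0 ht).1 h

lemma measure_val_event (hw : 1 ≤ n*(M+1)) (Tup : Fin n → Ω → ℝ)
    (htrim : ∀ i : Fin n, ∀ ℓ < 2^(n*(M+1)), ∀ x y : Ω,
      (x:ℝ) ∈ D M n ℓ → (y:ℝ) ∈ D M n ℓ → Tup i x = Tup i y)
    (i : Fin n) (v : ℝ) :
    (volume : Measure Ω) {ω | Tup i ω = v} =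
      (((Finset.univ.filter (fun ℓ : Fin (2^(n*(M+1))) => Tup i (ptD ℓ) = v)).card : ℕ) : ℝ≥0∞)
        * ((2:ℝ≥0∞)^(n*(M+1)))⁻¹ := by
  classical
  have h1 : {ω : Ω | Tup i ω = v}
      = {ω : Ω | (fun ℓ => ∃ h : ℓ < 2^(n*(M+1)), Tup i (ptD ⟨ℓ, h⟩) = v) (fl (n*(M+1)) ω.1)} := by
    ext ω
    simp only [mem_setOf_eq]
    constructor
    · intro h
      exact ⟨fl_lt ω.2.1.le ω.2.2, (tup_eq_val hw Tup htrim i ω).symm.trans h⟩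
    · rintro ⟨h, h2⟩
      rw [tup_eq_val hw Tup htrim i ω]
      exact h2
  rw [h1, measure_fl hw (fun ℓ => ∃ h : ℓ < 2^(n*(M+1)), Tup i (ptD ⟨ℓ, h⟩) = v)]
  congr 2
  rw [card_filter_range_fin]
  apply congrArg
  apply Finset.filter_congr
  intro ℓ _
  constructor
  · rintro ⟨h, h2⟩; exact h2
  · intro h2; exact ⟨ℓ.2, h2⟩

lemma surj_main (hS : Setup M O o R) (hn : 1 ≤ n) (hw : 1 ≤ n*(M+1))
    (Tup : Fin n → Ω → ℝ) (hgood : GoodTuple M o R n Tup) :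
    ∃ π : Equiv.Perm (Fin (2^(n*(M+1)))), ∃ _ : Admissible M R n π,
      TupOf M n O hw π = Tup := by
  classical
  obtain ⟨hind, htrim, hdist, hsum⟩ := hgood
  -- Step 1: each level set of values has exactly 2^((M+1)(n-1)) cells
  have hL : ∀ (i : Fin n) (s : Fin (2^(M+1))),
      (Finset.univ.filter (fun ℓ : Fin (2^(n*(M+1))) => Tup i (ptD ℓ) = o s)).card
        = (2^(M+1))^(n-1) := by
    intro i s
    apply nat_of_mul_inv_pow (w := n*(M+1))
    rw [← measure_val_event hw Tup htrim i (o s), hdist i s, ← final_dist_alg (M := M) hn]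
  -- Step 2: every cell carries a value from the range of o, for every i
  have hcover : ∀ (i : Fin n) (ℓ : Fin (2^(n*(M+1)))), ∃ s : Fin (2^(M+1)),
      Tup i (ptD ℓ) = o s := by
    intro i ℓ
    have hbU : (Finset.univ.biUnion (fun s : Fin (2^(M+1)) =>
        Finset.univ.filter (fun ℓ' : Fin (2^(n*(M+1))) => Tup i (ptD ℓ') = o s)))
        = Finset.univ := by
      apply Finset.eq_univ_of_card
      rw [Finset.card_biUnion]
      · rw [Finset.sum_congr rfl (fun s _ => hL i s), Finset.sum_const, smul_eq_mul,
          Finset.card_univ, Fintype.card_fin, Fintype.card_fin, two_pow_w]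
        rw [← pow_succ']
        congr 1
        omega
      · intro s _ s' _ hss
        rw [Function.onFun, Finset.disjoint_left]
        intro a ha ha'
        rw [Finset.mem_filter] at ha ha'
        exact hss (hS.o_mono.injective (ha.2.symm.trans ha'.2))
    have : ℓ ∈ Finset.univ.biUnion (fun s : Fin (2^(M+1)) =>
        Finset.univ.filter (fun ℓ' : Fin (2^(n*(M+1))) => Tup i (ptD ℓ') = o s)) := by
      rw [hbU]; exact Finset.mem_univ ℓ
    obtain ⟨s, _, hs⟩ := Finset.mem_biUnion.1 this
    exact ⟨s, (Finset.mem_filter.1 hs).2⟩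
  -- Step 3: the permutation
  have hov : ∀ (ℓ : Fin (2^(n*(M+1)))) (i : Fin n), ∃ s : Fin (2^(M+1)),
      ovF M O s.1 = Tup i (ptD ℓ) := by
    intro ℓ i
    obtain ⟨s, hs⟩ := hcover i ℓ
    obtain ⟨s', hs'⟩ := o_eq_ovF hS s
    exact ⟨s', hs'.trans hs.symm⟩
  have hgspec : ∀ ℓ i, ovF M O (((hov ℓ i).choose : Fin _) : ℕ) = Tup i (ptD ℓ) :=
    fun ℓ i => (hov ℓ i).choose_spec
  set π0 : Fin (2^(n*(M+1))) → Fin (2^(n*(M+1))) :=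
    fun ℓ => (blkE M n).symm (fun i => (hov ℓ i).choose) with hπ0
  have hπ0inj : Function.Injective π0 := by
    intro ℓ₁ ℓ₂ h
    have hgeq : (fun i => (hov ℓ₁ i).choose) = (fun i => (hov ℓ₂ i).choose) := by
      have := congrArg (blkE M n) h
      simpa [hπ0] using this
    have hveq : ∀ i, Tup i (ptD ℓ₁) = Tup i (ptD ℓ₂) := by
      intro i
      rw [← hgspec ℓ₁ i, ← hgspec ℓ₂ i]
      rw [congrFun hgeq i]
    by_contra hne
    choose t ht using fun i => hcover i ℓ₁
    have hI := (iIndepFun_iff_measure_inter_preimage_eq_mul.1 hind) Finset.univ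
      (sets := fun i => {o (t i)}) (fun i _ => measurableSet_singleton _)
    have hRHS : ∏ i, (volume : Measure Ω) (Tup i ⁻¹' {o (t i)}) = ((2:ℝ≥0∞)^(n*(M+1)))⁻¹ := by
      have he : ∀ i ∈ Finset.univ, (volume : Measure Ω) (Tup i ⁻¹' {o (t i)})
          = ((2:ℝ≥0∞)^(M+1))⁻¹ := by
        intro i _
        have : Tup i ⁻¹' {o (t i)} = {ω : Ω | Tup i ω = o (t i)} := rfl
        rw [this, hdist i (t i)]
      rw [Finset.prod_congr rfl he, Finset.prod_const, Finset.card_univ, Fintype.card_fin,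
        ← ENNReal.inv_pow, ← pow_mul, mul_comm (M+1) n]
    have hsub : {ω : Ω | fl (n*(M+1)) (ω : ℝ) = ℓ₁.1 ∨ fl (n*(M+1)) (ω : ℝ) = ℓ₂.1}
        ⊆ ⋂ i ∈ Finset.univ, Tup i ⁻¹' {o (t i)} := by
      intro ω hω
      simp only [mem_iInter, mem_preimage, mem_singleton_iff]
      intro i _
      rcases hω with h1 | h1
      · rw [tup_eq_val hw Tup htrim i ω, show flF hw ω = ℓ₁ from Fin.ext h1]
        exact ht i
      · rw [tup_eq_val hw Tup htrim i ω, show flF hw ω = ℓ₂ from Fin.ext h1, ← hveq i]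
        exact ht i
    have h2cell : (volume : Measure Ω)
        {ω : Ω | fl (n*(M+1)) (ω : ℝ) = ℓ₁.1 ∨ fl (n*(M+1)) (ω : ℝ) = ℓ₂.1}
        = 2 * ((2:ℝ≥0∞)^(n*(M+1)))⁻¹ := by
      rw [measure_fl hw (fun ℓ => ℓ = ℓ₁.1 ∨ ℓ = ℓ₂.1)]
      have hfe : (Finset.range (2^(n*(M+1)))).filter (fun ℓ => ℓ = ℓ₁.1 ∨ ℓ = ℓ₂.1)
          = {ℓ₁.1, ℓ₂.1} := by
        ext a
        simp only [Finset.mem_filter, Finset.mem_range, Finset.mem_insert, Finset.mem_singleton]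
        constructor
        · rintro ⟨_, h⟩; exact h
        · rintro (rfl | rfl)
          · exact ⟨ℓ₁.2, Or.inl rfl⟩
          · exact ⟨ℓ₂.2, Or.inr rfl⟩
      rw [hfe, Finset.card_insert_of_notMem (by
        simp only [Finset.mem_singleton]
        exact fun hc => hne (Fin.ext hc)), Finset.card_singleton]
      norm_num
    have hle := measure_mono (μ := (volume : Measure Ω)) hsub
    rw [h2cell, hI, hRHS] at hle
    have h1le : (2:ℝ≥0∞) ≤ 1 := by
      have h0 : ((2:ℝ≥0∞)^(n*(M+1)))⁻¹ ≠ 0 :=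
        ENNReal.inv_ne_zero.2 (ENNReal.pow_ne_top ENNReal.ofNat_ne_top)
      have ht' : ((2:ℝ≥0∞)^(n*(M+1)))⁻¹ ≠ ⊤ :=
        ENNReal.inv_ne_top.2 (pow_ne_zero _ (by norm_num : (2:ℝ≥0∞) ≠ 0))
      have := (ENNReal.mul_le_mul_iff_left h0 ht').1 (by
        calc (2:ℝ≥0∞) * ((2:ℝ≥0∞)^(n*(M+1)))⁻¹ ≤ ((2:ℝ≥0∞)^(n*(M+1)))⁻¹ := hle
        _ = 1 * ((2:ℝ≥0∞)^(n*(M+1)))⁻¹ := (one_mul _).symm)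
      exact this
    norm_num at h1le
  set π : Equiv.Perm (Fin (2^(n*(M+1)))) :=
    Equiv.ofBijective π0 (Finite.injective_iff_bijective.1 hπ0inj) with hπdef
  have hblk : ∀ ℓ : Fin (2^(n*(M+1))), blkE M n (π ℓ) = fun i => (hov ℓ i).choose := by
    intro ℓ
    show blkE M n (π0 ℓ) = _
    rw [hπ0]
    exact (blkE M n).apply_symm_apply _
  have hTup : ∀ (i : Fin n) (ω : Ω), Tup i ω = ovF M O (blk M n i.1 ((π (flF hw ω)) : ℕ)) := by
    intro i ω
    rw [tup_eq_val hw Tup htrim i ω, ← hgspec (flF hw ω) i]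
    have h3 : blk M n i.1 ((π (flF hw ω)) : ℕ) = (((blkE M n (π (flF hw ω))) i : Fin _) : ℕ) :=
      rfl
    rw [h3, hblk (flF hw ω)]
  have hadm : Admissible M R n π := by
    intro ℓ x hx y hy
    obtain ⟨hxIoo, hxfl⟩ := (mem_D_iff hw ℓ.2).1 hx
    have h1 := hsum ⟨x, hxIoo⟩
    have h2 : ∀ i : Fin n, Tup i ⟨x, hxIoo⟩ = R (i.1+1) y := by
      intro i
      rw [hTup i ⟨x, hxIoo⟩, R_on_E hS hn hy i.2,
        show flF hw ⟨x, hxIoo⟩ = ℓ from Fin.ext hxfl]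
    calc Sstar R n x = ∑ i, Tup i ⟨x, hxIoo⟩ := h1.symm
    _ = ∑ i : Fin n, R (i.1+1) y := Finset.sum_congr rfl (fun i _ => h2 i)
    _ = S R n y := (sum_Icc_one n (fun i => R i y)).symm
  refine ⟨π, hadm, ?_⟩
  funext i ω
  rw [hTup i ω]
  rfl

end Backward

/-- Theorem 1: the canonical map π ↦ (R*_{n,1},…,R*_{n,n}), where
R*_{n,i}(x) = R_i(y) for x ∈ D_{n,ℓ} and y ∈ E_{n,π(ℓ)}, is a bijection from the
admissible permutations of {0,…,2^{n(M+1)}-1} onto the good n-tuples. -/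
theorem stmt_5 (M : ℕ) (O : ℝ → ℝ) (o : Fin (2 ^ (M + 1)) → ℝ) (R : ℕ → ℝ → ℝ)
    (hS : Setup M O o R) (n : ℕ) (hn : 1 ≤ n) :
    ∃ Φ : { π : Equiv.Perm (Fin (2 ^ (n * (M + 1)))) // Admissible M R n π } →
          { Tup : Fin n → Ω → ℝ // GoodTuple M o R n Tup },
      Function.Bijective Φ ∧
      ∀ π (ℓ : Fin (2 ^ (n * (M + 1)))) (i : Fin n) (x : Ω) (y : ℝ),
        (x : ℝ) ∈ D M n (ℓ : ℕ) → y ∈ E M n ((π.1 ℓ : Fin _) : ℕ) →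
        (Φ π).1 i x = R ((i : ℕ) + 1) y := by
  have hw : 1 ≤ n * (M + 1) := Nat.one_le_iff_ne_zero.2 (Nat.mul_ne_zero (by omega) (by omega))
  refine ⟨fun πs => ⟨TupOf M n O hw πs.1, good_TupOf hS hn hw πs.1 πs.2⟩, ⟨?_, ?_⟩, ?_⟩
  · -- injective
    intro π₁ π₂ h
    have h' : TupOf M n O hw π₁.1 = TupOf M n O hw π₂.1 := congrArg Subtype.val h
    apply Subtype.ext
    apply Equiv.ext
    intro ℓ
    apply (blkE M n).injective
    funext i
    apply Fin.ext
    apply ovF_inj hS ((blkE M n (π₁.1 ℓ)) i).2 ((blkE M n (π₂.1 ℓ)) i).2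
    have h2 := congrFun (congrFun h' i) (ptD ℓ)
    simp only [TupOf] at h2
    rwa [flF_ptD hw ℓ] at h2
  · -- surjective
    rintro ⟨Tup, hgood⟩
    obtain ⟨π, hadm, hTup⟩ := surj_main hS hn hw Tup hgood
    exact ⟨⟨π, hadm⟩, Subtype.ext hTup⟩
  · -- compatibility
    intro π ℓ i x y hx hy
    show ovF M O ((blkE M n (π.1 (flF hw x))) i).1 = R (i.1 + 1) y
    rw [flF_eq_of_mem_D hw hx, R_on_E hS hn hy i.2]
    rfl

end DGS
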